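/- Let G = (V,E) be a finite undirected unweighted graph and let v, u, w ∈ V with δ(v,w) ≥ δ(v,u). Let Q be a shortest v–u path in G on which x₁ appears strictly before x₂ (in the order along Q from v to u). Then δ(x₂,w,x₁) ≥ δ(x₂,u,x₁). -/

import Mathlib

open scoped ENNReal Classical

/-- The graph `G` with vertex `x` "failed": edges incident to `x` are removed,
so that walks in `G.avoid x` are exactly walks of `G` avoiding `x`
(for endpoints different from `x`). -/
def SimpleGraph.avoid {V : Type*} (G : SimpleGraph V) (x : V) : SimpleGraph V where
  Adj a b := G.Adj a b ∧ a ≠ x ∧ b ≠ x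
  symm := ⟨fun _ _ h => ⟨h.1.symm, h.2.2, h.2.1⟩⟩
  loopless := ⟨fun a h => G.loopless.irrefl a h.1⟩

/-- `δ(a,b,x)` : the distance (in `ℕ∞`) between `a` and `b` in `G − x`,
with the convention that it is `∞` if `a = x` or `b = x`. -/
noncomputable def davoid {V : Type*} (G : SimpleGraph V) (a b x : V) : ℕ∞ :=
  if a = x ∨ b = x then ⊤ else (G.avoid x).edist a b

/-- `δ(v,B)` : distance from `v` to the set `B`. -/
noncomputable def dset {V : Type*} (G : SimpleGraph V) (v : V) (B : Set V) : ℕ∞ :=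
  ⨅ w ∈ B, G.edist v w

/-- `δ(v,B,x)` : distance from `v` to the set `B` in `G − x`. -/
noncomputable def dsetAvoid {V : Type*} (G : SimpleGraph V) (v : V) (B : Set V) (x : V) : ℕ∞ :=
  ⨅ w ∈ B, davoid G v w x

/-- `Ball(v,A,B) = {w ∈ A : δ(v,w) < δ(v,B)}`. -/
def ball {V : Type*} (G : SimpleGraph V) (v : V) (A B : Set V) : Set V :=
  {w ∈ A | G.edist v w < dset G v B}

/-- `Ball^x(v,A,B) = {w ∈ A : δ(v,w,x) < δ(v,B,x)}`. -/
def ballAvoid {V : Type*} (G : SimpleGraph V) (v : V) (A B : Set V) (x : V) : Set V :=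
  {w ∈ A | davoid G v w x < dsetAvoid G v B x}

/-- `Ball^x(v,A,B,ε) = {w ∈ A : (1+ε)·δ(v,w,x) < δ(v,B,x)}`. -/
def ballTrunc {V : Type*} (G : SimpleGraph V) (v : V) (A B : Set V) (x : V) (ε : ℝ) : Set V :=
  {w ∈ A | ENNReal.ofReal (1 + ε) * (davoid G v w x : ℝ≥0∞) < (dsetAvoid G v B x : ℝ≥0∞)}

/-- `C^x(w,A,B,ε) = {v ∈ V : (1+ε)·δ(v,w,x) < δ(v,B,x)}`. -/
def clusterTrunc {V : Type*} (G : SimpleGraph V) (w : V) (B : Set V) (x : V) (ε : ℝ) : Set V :=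
  {v | ENNReal.ofReal (1 + ε) * (davoid G v w x : ℝ≥0∞) < (dsetAvoid G v B x : ℝ≥0∞)}

/-!
Split `Q` at `x₂` into `v ⟶ x₂ ⟶ u`. Since `x₁` comes before `x₂` and `Q` is a path, the tail
`x₂ ⟶ u` avoids `x₁`, so `δ(x₂,u,x₁)` is at most its length `δ(v,u) - δ(v,x₂)`. On the other
hand `δ(x₂,w,x₁) ≥ δ(x₂,w) ≥ δ(v,w) - δ(v,x₂) ≥ δ(v,u) - δ(v,x₂)` by the triangle inequality.
-/

theorem List.idxOf_head_le_idxOf_of_nodup {α : Type*} [BEq α] [LawfulBEq α] {A B : List α}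
    {b y : α} (h : (A ++ b :: B).Nodup) (hy : y ∈ b :: B) :
    (A ++ b :: B).idxOf b ≤ (A ++ b :: B).idxOf y := by
  have hdisj := (List.nodup_append.1 h).2.2
  have hbA : b ∉ A := fun hb => hdisj b hb b List.mem_cons_self rfl
  have hyA : y ∉ A := fun hyA => hdisj y hyA y hy rfl
  rw [List.idxOf_append_of_notMem hbA, List.idxOf_append_of_notMem hyA, List.idxOf_cons_self]
  exact Nat.le_add_right _ _

namespace SimpleGraph

variable {V : Type*} {G : SimpleGraph V}

theorem avoid_le (x : V) : G.avoid x ≤ G :=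
  fun _ _ h => h.1

theorem edist_le_davoid (a b x : V) : G.edist a b ≤ davoid G a b x := by
  unfold davoid
  split_ifs
  · exact le_top
  · exact edist_anti (avoid_le x)

namespace Walk

theorem exists_avoid_length_eq {a b x : V} (p : G.Walk a b) (hx : x ∉ p.support) :
    ∃ q : (G.avoid x).Walk a b, q.length = p.length := by
  induction p with
  | nil => exact ⟨nil, rfl⟩
  | @cons a c b h p ih =>
    rw [support_cons, List.mem_cons, not_or] at hx
    obtain ⟨q, hq⟩ := ih hx.2
    have hc : c ≠ x := fun hcx => hx.2 (hcx ▸ p.start_mem_support)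
    have hadj : (G.avoid x).Adj a c := ⟨h, Ne.symm hx.1, hc⟩
    exact ⟨cons hadj q, congrArg (· + 1) hq⟩

theorem davoid_le_length {a b x : V} (p : G.Walk a b) (hx : x ∉ p.support) :
    davoid G a b x ≤ p.length := by
  have ha : a ≠ x := fun h => hx (h ▸ p.start_mem_support)
  have hb : b ≠ x := fun h => hx (h ▸ p.end_mem_support)
  obtain ⟨q, hq⟩ := p.exists_avoid_length_eq hx
  rw [davoid, if_neg (by tauto), ← hq]
  exact q.edist_le

variable [DecidableEq V]

theorem idxOf_le_idxOf_of_mem_support_dropUntil {u v x y : V} {p : G.Walk u v}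
    (hp : p.support.Nodup) (hx : x ∈ p.support) (hy : y ∈ (p.dropUntil x hx).support) :
    p.support.idxOf x ≤ p.support.idxOf y := by
  have hsplit : p.support = (p.takeUntil x hx).support.dropLast ++ (p.dropUntil x hx).support := by
    conv_lhs => rw [← p.take_spec hx]
    exact support_append_eq_support_dropLast_append _ _
  rw [← (p.dropUntil x hx).cons_tail_support] at hsplit hy
  rw [hsplit] at hp ⊢
  exact List.idxOf_head_le_idxOf_of_nodup hp hy

theorem notMem_support_dropUntil_of_idxOf_lt {u v x y : V} {p : G.Walk u v} (hp : p.IsPath)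
    (hx : x ∈ p.support) (hyx : p.support.idxOf y < p.support.idxOf x) :
    y ∉ (p.dropUntil x hx).support := fun hy =>
  (idxOf_le_idxOf_of_mem_support_dropUntil hp.support_nodup hx hy).not_gt hyx

theorem length_dropUntil_le_edist {u v w x : V} {p : G.Walk v u}
    (hp : (p.length : ℕ∞) = G.edist v u) (hd : G.edist v u ≤ G.edist v w) (hx : x ∈ p.support) :
    ((p.dropUntil x hx).length : ℕ∞) ≤ G.edist x w := by
  have hlen : (p.length : ℕ∞) = (p.takeUntil x hx).length + (p.dropUntil x hx).length := by
    rw [← congrArg length (p.take_spec hx), length_append, Nat.cast_add]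
  have key : ((p.takeUntil x hx).length : ℕ∞) + (p.dropUntil x hx).length ≤
      (p.takeUntil x hx).length + G.edist x w :=
    calc ((p.takeUntil x hx).length : ℕ∞) + (p.dropUntil x hx).length
        = G.edist v u := hlen.symm.trans hp
      _ ≤ G.edist v w := hd
      _ ≤ G.edist v x + G.edist x w := G.edist_triangle
      _ ≤ (p.takeUntil x hx).length + G.edist x w := add_le_add_left (edist_le _) _
  exact (WithTop.add_le_add_iff_left (WithTop.natCast_ne_top _)).1 key

end Walk

end SimpleGraph

theorem stmt13_general {V : Type*} [DecidableEq V] (G : SimpleGraph V) (v u w : V)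
    (hd : G.edist v u ≤ G.edist v w)
    (Q : G.Walk v u) (hQ : Q.IsPath) (hQlen : (Q.length : ℕ∞) = G.edist v u)
    (x₁ x₂ : V) (hx₂ : x₂ ∈ Q.support)
    (horder : Q.support.idxOf x₁ < Q.support.idxOf x₂) :
    davoid G x₂ u x₁ ≤ davoid G x₂ w x₁ :=
  calc davoid G x₂ u x₁
      ≤ (Q.dropUntil x₂ hx₂).length :=
        (Q.dropUntil x₂ hx₂).davoid_le_length (Q.notMem_support_dropUntil_of_idxOf_lt hQ hx₂ horder)
    _ ≤ G.edist x₂ w := Q.length_dropUntil_le_edist hQlen hd hx₂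
    _ ≤ davoid G x₂ w x₁ := G.edist_le_davoid x₂ w x₁

/-- with `δ(v,w) ≥ δ(v,u)` and `Q` a shortest `v`–`u` path on which
`x₁` appears strictly before `x₂`, we have `δ(x₂,w,x₁) ≥ δ(x₂,u,x₁)`. -/
theorem stmt13 {V : Type*} [Fintype V] [DecidableEq V] (G : SimpleGraph V) (v u w : V)
    (hd : G.edist v u ≤ G.edist v w)
    (Q : G.Walk v u) (hQ : Q.IsPath) (hQlen : (Q.length : ℕ∞) = G.edist v u)
    (x₁ x₂ : V) (hx₁ : x₁ ∈ Q.support) (hx₂ : x₂ ∈ Q.support)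
    (horder : Q.support.idxOf x₁ < Q.support.idxOf x₂) :
    davoid G x₂ u x₁ ≤ davoid G x₂ w x₁ :=
  stmt13_general G v u w hd Q hQ hQlen x₁ x₂ hx₂ horder
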